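/- In an Osborn loop Q, for every x ∈ Q one has ((x^λ)^λ)^λ·(((x^λ)^λ)·x) = x^λ·(x·x). -/
import Mathlib


/-- A loop: a type with a binary operation `*` and identity `1` such that all
left and right translations are bijective (witnessed by the two division
operations `ldiv` (`x \ z`) and `rdiv` (`z / y`)). -/
class LoopStr (Q : Type*) extends Mul Q, One Q where
  one_mul : ∀ x : Q, 1 * x = x
  mul_one : ∀ x : Q, x * 1 = x
  /-- `ldiv a b = a \ b`, the unique `y` with `a * y = b`. -/
  ldiv : Q → Q → Q
  /-- `rdiv b a = b / a`, the unique `x` with `x * a = b`. -/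
  rdiv : Q → Q → Q
  mul_ldiv : ∀ a b : Q, a * ldiv a b = b
  ldiv_mul : ∀ a b : Q, ldiv a (a * b) = b
  rdiv_mul : ∀ a b : Q, rdiv a b * b = a
  mul_rdiv : ∀ a b : Q, rdiv (a * b) b = a

namespace LoopStr

variable {Q : Type*} [LoopStr Q]

/-- `x^λ`, the unique left inverse of `x` : `x^λ * x = 1`. -/
def lInv (x : Q) : Q := rdiv 1 x

/-- `x^ρ`, the unique right inverse of `x` : `x * x^ρ = 1`. -/
def rInv (x : Q) : Q := ldiv x 1

/-- A loop is Osborn if `x * (((x^λ * y) * z) * x) = y * (z * x)` for all `x,y,z`. -/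
def IsOsborn (Q : Type*) [LoopStr Q] : Prop :=
  ∀ x y z : Q, x * (((lInv x * y) * z) * x) = y * (z * x)

end LoopStr

open LoopStr

section Aux

variable {Q : Type*} [LoopStr Q]

lemma lInv_mul_self (x : Q) : lInv x * x = 1 := LoopStr.rdiv_mul 1 x

lemma left_cancel {a b c : Q} (h : a * b = a * c) : b = c := by
  have := congrArg (LoopStr.ldiv a) h
  rwa [LoopStr.ldiv_mul, LoopStr.ldiv_mul] at this

lemma right_cancel {a b c : Q} (h : b * a = c * a) : b = c := by
  have := congrArg (fun t => LoopStr.rdiv t a) h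
  simpa [LoopStr.mul_rdiv] using this

/-- Osborn identity with `y = 1`:  `x * ((x^λ * z) * x) = z * x`. -/
lemma osbornA (h : IsOsborn Q) (x z : Q) :
    x * ((lInv x * z) * x) = z * x := by
  have := h x 1 z
  rwa [LoopStr.mul_one, LoopStr.one_mul] at this

/-- Osborn identity with `z = x^λ`:  `x * (((x^λ * y) * x^λ) * x) = y`. -/
lemma osbornB (h : IsOsborn Q) (x y : Q) :
    x * (((lInv x * y) * lInv x) * x) = y := by
  have := h x y (lInv x)
  rwa [lInv_mul_self, LoopStr.mul_one] at this

/-- `(x^λ * y) * x^λ = (x \ y) / x`. -/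
lemma aux1 (h : IsOsborn Q) (x y : Q) :
    (lInv x * y) * lInv x = LoopStr.rdiv (LoopStr.ldiv x y) x := by
  apply right_cancel (a := x)
  rw [LoopStr.rdiv_mul]
  apply left_cancel (a := x)
  rw [osbornB h, LoopStr.mul_ldiv]

/-- `x^λ * z = (x \ (z * x)) / x`. -/
lemma aux2 (h : IsOsborn Q) (x z : Q) :
    lInv x * z = LoopStr.rdiv (LoopStr.ldiv x (z * x)) x := by
  apply right_cancel (a := x)
  rw [LoopStr.rdiv_mul]
  apply left_cancel (a := x)
  rw [osbornA h, LoopStr.mul_ldiv]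

/-- Key lemma: `x^λλ * (x^λ * w) = x^λ * (x * w)`. -/
lemma key (h : IsOsborn Q) (x w : Q) :
    lInv (lInv x) * (lInv x * w) = lInv x * (x * w) := by
  apply right_cancel (a := lInv x)
  apply left_cancel (a := lInv x)
  calc lInv x * (lInv (lInv x) * (lInv x * w) * lInv x)
      = (lInv x * w) * lInv x := osbornA h (lInv x) (lInv x * w)
    _ = LoopStr.rdiv (LoopStr.ldiv x w) x := aux1 h x w
    _ = LoopStr.rdiv (LoopStr.ldiv x (LoopStr.rdiv w x * x)) x := by
        rw [LoopStr.rdiv_mul]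
    _ = lInv x * LoopStr.rdiv w x := (aux2 h x _).symm
    _ = lInv x * LoopStr.rdiv (LoopStr.ldiv x (x * w)) x := by
        rw [LoopStr.ldiv_mul]
    _ = lInv x * (lInv x * (x * w) * lInv x) := by rw [← aux1 h x (x * w)]

end Aux

/-- in an Osborn loop, `((x^λ)^λ)^λ·(((x^λ)^λ)·x) = x^λ·(x·x)`. -/
theorem stmt11 (Q : Type*) [LoopStr Q] (h : IsOsborn Q) :
    ∀ x : Q, lInv (lInv (lInv x)) * (lInv (lInv x) * x) = lInv x * (x * x) := by
  intro x
  rw [key h (lInv x) x, key h x x]
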